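/- Suppose Ω3 = Ω1 + 2Δ. Then for every N > 0, every ρ ∈ [−N/2, N/2], and all φ1, φ3 ∈ ℝ, the trimer Hamiltonian restricted to the even subspace satisfies H(√(N/2−ρ)·e^{iφ1}, 0, √(N/2+ρ)·e^{iφ3}) = 2Δρ − A·N·√(N²−4ρ²)·cos(φ1−φ3) − (3A/2)·(N²−4ρ²)·cos²(φ1−φ3) − (3A/2)·N² + Δ·N + N·Ω1. -/

import Mathlib

/-! On the even subspace `c₂ = 0` every term involving `c₂` vanishes, and `H` depends on `c₁, c₃`
only through `|c₁|²`, `|c₃|²` and `Re (c₁ c̄₃)`. In the polar variables these are `N/2 - ρ`,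
`N/2 + ρ` and `½ √(N² - 4ρ²) cos (φ₁ - φ₃)`, and the formula is a polynomial identity in them. -/
open Complex ComplexConjugate

/-- The trimer Hamiltonian on ℂ³ with real parameters Ω₁, Ω₂, Ω₃, A. -/
noncomputable def trimerH (Ω1 Ω2 Ω3 A : ℝ) (c1 c2 c3 : ℂ) : ℂ :=
  (Ω1 : ℂ) * c1 * conj c1 + (Ω2 : ℂ) * c2 * conj c2 + (Ω3 : ℂ) * c3 * conj c3
    - (A : ℂ) *
      ((3 / 2) * (c1 * conj c1 + c3 * conj c3) ^ 2
        + (3 / 2) * (c1 * conj c3 + conj c1 * c3) ^ 2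
        + (c1 * conj c1 + c3 * conj c3) * (c1 * conj c3 + conj c1 * c3)
        + 2 * (c2 * conj c2) ^ 2
        + 4 * (c2 * conj c2) * ((c3 - c1) * (conj c3 - conj c1))
        + (c3 - c1) ^ 2 * (conj c2) ^ 2
        + (conj c3 - conj c1) ^ 2 * c2 ^ 2)

theorem trimerH_zero_middle (Ω1 Ω2 Ω3 A : ℝ) (c1 c3 : ℂ) :
    trimerH Ω1 Ω2 Ω3 A c1 0 c3 =
      ((Ω1 * normSq c1 + Ω3 * normSq c3
        - A * (3 / 2 * (normSq c1 + normSq c3) ^ 2 + 6 * (c1 * conj c3).re ^ 2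
          + 2 * (normSq c1 + normSq c3) * (c1 * conj c3).re) : ℝ) : ℂ) := by
  have hcross : c1 * conj c3 + conj c1 * c3 = ((2 * (c1 * conj c3).re : ℝ) : ℂ) := by
    rw [← add_conj, map_mul, conj_conj]
  simp only [trimerH, map_zero, mul_zero, zero_mul, mul_assoc, mul_conj, hcross]
  push_cast
  ring

theorem normSq_ofReal_mul_exp_I_mul (r φ : ℝ) : normSq (r * exp (I * φ)) = r ^ 2 := by
  rw [normSq_mul, normSq_ofReal, normSq_eq_norm_sq, norm_exp_I_mul_ofReal]
  ring

theorem re_ofReal_mul_exp_I_mul_conj (r s φ ψ : ℝ) :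
    (r * exp (I * φ) * conj (s * exp (I * ψ))).re = r * s * Real.cos (φ - ψ) := by
  have hpolar : r * exp (I * φ) * conj (s * exp (I * ψ)) = (r * s : ℝ) * exp ((φ - ψ : ℝ) * I) := by
    rw [map_mul, conj_ofReal, ← exp_conj, map_mul, conj_I, conj_ofReal, mul_mul_mul_comm, ← exp_add]
    push_cast
    ring_nf
  rw [hpolar, re_ofReal_mul, exp_ofReal_mul_I_re]

theorem trimerH_even_subspace_general (Ω1 Ω2 Ω3 A Δ : ℝ) (hΩ : Ω3 = Ω1 + 2 * Δ)
    (N ρ φ1 φ3 : ℝ) (hρ : ρ ∈ Set.Icc (-(N / 2)) (N / 2)) :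
    trimerH Ω1 Ω2 Ω3 A
        ((Real.sqrt (N / 2 - ρ) : ℂ) * Complex.exp (Complex.I * (φ1 : ℂ)))
        0
        ((Real.sqrt (N / 2 + ρ) : ℂ) * Complex.exp (Complex.I * (φ3 : ℂ)))
      = ((2 * Δ * ρ
          - A * N * Real.sqrt (N ^ 2 - 4 * ρ ^ 2) * Real.cos (φ1 - φ3)
          - (3 * A / 2) * (N ^ 2 - 4 * ρ ^ 2) * Real.cos (φ1 - φ3) ^ 2
          - (3 * A / 2) * N ^ 2 + Δ * N + N * Ω1 : ℝ) : ℂ) := by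
  have h1 : 0 ≤ N / 2 - ρ := by linarith [hρ.2]
  have h3 : 0 ≤ N / 2 + ρ := by linarith [hρ.1]
  have hsqrt : Real.sqrt (N ^ 2 - 4 * ρ ^ 2) = 2 * (√(N / 2 - ρ) * √(N / 2 + ρ)) := by
    rw [← Real.sqrt_mul h1, show N ^ 2 - 4 * ρ ^ 2 = 2 ^ 2 * ((N / 2 - ρ) * (N / 2 + ρ)) by ring,
      Real.sqrt_mul (by positivity), Real.sqrt_sq zero_le_two]
  have hprod : (√(N / 2 - ρ) * √(N / 2 + ρ)) ^ 2 = (N / 2 - ρ) * (N / 2 + ρ) := by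
    rw [mul_pow, Real.sq_sqrt h1, Real.sq_sqrt h3]
  rw [trimerH_zero_middle, normSq_ofReal_mul_exp_I_mul, normSq_ofReal_mul_exp_I_mul,
    re_ofReal_mul_exp_I_mul_conj, Real.sq_sqrt h1, Real.sq_sqrt h3, hsqrt, hΩ]
  congr 1
  linear_combination (-6 * A * Real.cos (φ1 - φ3) ^ 2) * hprod

/-- With `Ω₃ = Ω₁ + 2Δ`, the trimer Hamiltonian restricted to the even subspace
`{c₂ = 0}`, expressed in the canonical polar-type variables `(ρ, φ₁, φ₃)`. -/
theorem trimerH_even_subspace (Ω1 Ω2 Ω3 A Δ : ℝ) (hΩ : Ω3 = Ω1 + 2 * Δ)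
    (N ρ φ1 φ3 : ℝ) (hN : 0 < N) (hρ : ρ ∈ Set.Icc (-(N / 2)) (N / 2)) :
    trimerH Ω1 Ω2 Ω3 A
        ((Real.sqrt (N / 2 - ρ) : ℂ) * Complex.exp (Complex.I * (φ1 : ℂ)))
        0
        ((Real.sqrt (N / 2 + ρ) : ℂ) * Complex.exp (Complex.I * (φ3 : ℂ)))
      = ((2 * Δ * ρ
          - A * N * Real.sqrt (N ^ 2 - 4 * ρ ^ 2) * Real.cos (φ1 - φ3)
          - (3 * A / 2) * (N ^ 2 - 4 * ρ ^ 2) * Real.cos (φ1 - φ3) ^ 2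
          - (3 * A / 2) * N ^ 2 + Δ * N + N * Ω1 : ℝ) : ℂ) :=
  trimerH_even_subspace_general Ω1 Ω2 Ω3 A Δ hΩ N ρ φ1 φ3 hρ
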